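/- arXiv:2506.14639 — 2 statements merged into one kernel-verified Lean document; each statement's English description precedes it below -/
import Mathlib

section
/- Let Ω ⊆ ℝ^n be an open set with more than one point that satisfies the interior corkscrew condition with constant κ ∈ (0,1). Let x ∈ ∂Ω, let r₀ > 0, and let u : Ω → ℝ be Lebesgue integrable on B(x,r₀) ∩ Ω. If a, b ∈ ℝ both satisfy lim_{r→0+} r^{−n} ∫_{B(x,r)∩Ω} |u(y) − c| dy = 0 (with c = a and with c = b respectively), then a = b. In other words, under the interior corkscrew condition, at each boundary point there is at most one real number f(x) such that the boundary trace condition holds at x. -/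
open MeasureTheory Metric Set ENNReal

noncomputable section

abbrev Eucl (n : ℕ) := EuclideanSpace ℝ (Fin n)

/-- The interior corkscrew condition with constant `κ`. -/
def CorkscrewCond {n : ℕ} (κ : ℝ) (Ω : Set (Eucl n)) : Prop :=
  ∀ x ∈ frontier Ω, ∀ r : ℝ, 0 < r → ENNReal.ofReal r < EMetric.diam Ω →
    ∃ z ∈ ball x r, ball z (κ * r) ⊆ Ω

/-!
If both `a` and `b` are boundary traces of `u` at `x`, then on any set `s` the triangle inequality
gives `|a - b| |s| ≤ ∫_s |u - a| + |u - b|`. The corkscrew condition provides, at every small scale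
`r`, a ball of radius `κ r / 2` inside `B(x, r) ∩ Ω`, whose volume is a fixed multiple of `rⁿ`.
Dividing by `rⁿ` bounds `|a - b|` by a constant times the sum of the two normalized integrals,
which tends to `0`.
-/

open Filter Topology

theorem abs_sub_mul_measureReal_le_setIntegral {α : Type*} [MeasurableSpace α] {μ : Measure α}
    {s t : Set α} {u : α → ℝ} (hst : s ⊆ t) (ht : μ t ≠ ∞) (hu : IntegrableOn u t μ) (a b : ℝ) :
    |a - b| * μ.real s ≤ ∫ y in t, |u y - a| ∂μ + ∫ y in t, |u y - b| ∂μ := by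
  have hdev : ∀ c, IntegrableOn (fun y => |u y - c|) t μ := fun c =>
    (hu.sub (integrableOn_const ht)).abs
  have hsum := (hdev a).add (hdev b)
  calc |a - b| * μ.real s = ∫ _ in s, |a - b| ∂μ := by rw [setIntegral_const, smul_eq_mul, mul_comm]
    _ ≤ ∫ y in s, (|u y - a| + |u y - b|) ∂μ :=
        setIntegral_mono (integrableOn_const (ne_top_of_le_ne_top ht (measure_mono hst)))
          (hsum.mono_set hst) fun y => abs_sub_comm a (u y) ▸ abs_sub_le a (u y) b
    _ ≤ ∫ y in t, (|u y - a| + |u y - b|) ∂μ :=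
        setIntegral_mono_set hsum (ae_of_all _ fun y => by positivity) hst.eventuallyLE
    _ = ∫ y in t, |u y - a| ∂μ + ∫ y in t, |u y - b| ∂μ := integral_add (hdev a) (hdev b)

theorem MeasureTheory.Measure.addHaar_real_ball_of_pos {E : Type*} [NormedAddCommGroup E]
    [NormedSpace ℝ E] [MeasurableSpace E] [BorelSpace E] [FiniteDimensional ℝ E] (μ : Measure E)
    [μ.IsAddHaarMeasure] (x : E) {r : ℝ} (hr : 0 < r) :
    μ.real (ball x r) = r ^ Module.finrank ℝ E * μ.real (ball 0 1) := by
  rw [measureReal_def, Measure.addHaar_ball_of_pos μ x hr, toReal_mul,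
    toReal_ofReal (by positivity), measureReal_def]

theorem Set.Nontrivial.eventually_ofReal_lt_ediam {X : Type*} [EMetricSpace X] {s : Set X}
    (hs : s.Nontrivial) : ∀ᶠ r in 𝓝[>] (0 : ℝ), ENNReal.ofReal r < ediam s := by
  have hofReal : Tendsto ENNReal.ofReal (𝓝 0) (𝓝 0) := by
    simpa using ENNReal.continuous_ofReal.tendsto 0
  exact nhdsWithin_le_nhds (hofReal.eventually (gt_mem_nhds (ediam_pos_iff.2 hs)))

theorem CorkscrewCond.exists_ball_subset_ball_inter {n : ℕ} {κ : ℝ} {Ω : Set (Eucl n)}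
    (hcs : CorkscrewCond κ Ω) (hκ : κ ≤ 1) {x : Eucl n} (hx : x ∈ frontier Ω) {r : ℝ}
    (hr : 0 < r) (hrΩ : ENNReal.ofReal r < ediam Ω) :
    ∃ z, ball z (κ * r) ⊆ ball x (2 * r) ∩ Ω := by
  obtain ⟨z, hz, hzΩ⟩ := hcs x hx r hr hrΩ
  rw [mem_ball] at hz
  exact ⟨z, subset_inter (ball_subset_ball' (by nlinarith)) hzΩ⟩

theorem statement4_general
    (n : ℕ) (Ω : Set (Eucl n)) (hΩnt : Ω.Nontrivial)
    (κ : ℝ) (hκ : κ ∈ Set.Ioo (0:ℝ) 1) (hcs : CorkscrewCond κ Ω)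
    (x : Eucl n) (hx : x ∈ frontier Ω) (r₀ : ℝ) (hr₀ : 0 < r₀)
    (u : Eucl n → ℝ) (hu : IntegrableOn u (ball x r₀ ∩ Ω))
    (a b : ℝ)
    (ha : Filter.Tendsto (fun r : ℝ => (r ^ n)⁻¹ * ∫ y in ball x r ∩ Ω, |u y - a|)
      (nhdsWithin 0 (Set.Ioi 0)) (nhds 0))
    (hb : Filter.Tendsto (fun r : ℝ => (r ^ n)⁻¹ * ∫ y in ball x r ∩ Ω, |u y - b|)
      (nhdsWithin 0 (Set.Ioi 0)) (nhds 0)) :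
    a = b := by
  set V := volume.real (ball (0 : Eucl n) 1)
  have hc : 0 < (κ / 2) ^ n * V := by
    have hκ0 := hκ.1
    have hV : 0 < V := toReal_pos (measure_ball_pos _ _ one_pos).ne' measure_ball_lt_top.ne
    positivity
  have hbound : ∀ᶠ r in 𝓝[>] 0, |a - b| * ((κ / 2) ^ n * V) ≤
      (r ^ n)⁻¹ * (∫ y in ball x r ∩ Ω, |u y - a|) +
        (r ^ n)⁻¹ * ∫ y in ball x r ∩ Ω, |u y - b| := by
    filter_upwards [hΩnt.eventually_ofReal_lt_ediam, Ioo_mem_nhdsGT hr₀] with r hrΩ ⟨hr, hrr₀⟩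
    obtain ⟨z, hz⟩ := hcs.exists_ball_subset_ball_inter hκ.2.le hx (half_pos hr)
      ((ofReal_le_ofReal (half_le_self hr.le)).trans_lt hrΩ)
    rw [mul_div_cancel₀ r two_ne_zero] at hz
    have hsub : ball x r ∩ Ω ⊆ ball x r₀ ∩ Ω := inter_subset_inter_left _ (ball_subset_ball hrr₀.le)
    have hineq := abs_sub_mul_measureReal_le_setIntegral hz
      (measure_inter_lt_top_of_left_ne_top measure_ball_lt_top.ne).ne (hu.mono_set hsub) a b
    rw [Measure.addHaar_real_ball_of_pos volume z (mul_pos hκ.1 (half_pos hr)),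
      finrank_euclideanSpace_fin] at hineq
    rw [← mul_add, le_inv_mul_iff₀ (by positivity)]
    calc r ^ n * (|a - b| * ((κ / 2) ^ n * V)) = |a - b| * ((κ * (r / 2)) ^ n * V) := by ring
      _ ≤ _ := hineq
  have hle : |a - b| * ((κ / 2) ^ n * V) ≤ 0 := by
    simpa using ge_of_tendsto (ha.add hb) hbound
  exact sub_eq_zero.1 (abs_nonpos_iff.1 (nonpos_of_mul_nonpos_left hle hc))

/-- under the interior corkscrew condition, at each boundary point there is
at most one value for which the boundary trace condition holds. -/
theorem statement4
    (n : ℕ) (Ω : Set (Eucl n)) (hΩopen : IsOpen Ω) (hΩnt : Ω.Nontrivial)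
    (κ : ℝ) (hκ : κ ∈ Set.Ioo (0:ℝ) 1) (hcs : CorkscrewCond κ Ω)
    (x : Eucl n) (hx : x ∈ frontier Ω) (r₀ : ℝ) (hr₀ : 0 < r₀)
    (u : Eucl n → ℝ) (hu : IntegrableOn u (ball x r₀ ∩ Ω))
    (a b : ℝ)
    (ha : Filter.Tendsto (fun r : ℝ => (r ^ n)⁻¹ * ∫ y in ball x r ∩ Ω, |u y - a|)
      (nhdsWithin 0 (Set.Ioi 0)) (nhds 0))
    (hb : Filter.Tendsto (fun r : ℝ => (r ^ n)⁻¹ * ∫ y in ball x r ∩ Ω, |u y - b|)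
      (nhdsWithin 0 (Set.Ioi 0)) (nhds 0)) :
    a = b :=
  statement4_general n Ω hΩnt κ hκ hcs x hx r₀ hr₀ u hu a b ha hb
end
end

section
/- Let n ≥ 2 and let Ω ⊆ ℝ^n be a nonempty bounded open set whose boundary ∂Ω is d-Ahlfors regular for some real number d with 0 < d < n. Then d ≥ n−1. -/
open MeasureTheory Metric Set ENNReal Filter Topology

/-!
Compactness of `∂Ω` and the upper Ahlfors bound at one radius below `diam ∂Ω` give
`ℋ^d(∂Ω) < ∞`, hence `dim_H ∂Ω ≤ d`. Conversely, fix a direction `v` and let `P` be the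
orthogonal projection onto `v^⊥`: every line parallel to `v` through a point of the bounded
set `Ω` meets `∂Ω`, so `P(∂Ω)` contains the nonempty open set `P(Ω)` of the
`(n-1)`-dimensional space `v^⊥`. As `P` is `1`-Lipschitz,
`n - 1 = dim_H P(∂Ω) ≤ dim_H ∂Ω`.
-/

noncomputable section

def sMeasure {n : ℕ} (d : ℝ) (Γ : Set (Eucl n)) : Measure (Eucl n) := (μH[d]).restrict Γ

def AhlforsRegularWithin {n : ℕ} (d 𝒜 : ℝ) (Γ : Set (Eucl n)) (R : ℝ≥0∞) : Prop :=
  ∀ x ∈ Γ, ∀ r : ℝ, 0 < r → ENNReal.ofReal r < R →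
    ENNReal.ofReal (𝒜⁻¹ * r ^ d) ≤ sMeasure d Γ (ball x r) ∧
      sMeasure d Γ (ball x r) ≤ ENNReal.ofReal (𝒜 * r ^ d)

theorem exists_add_smul_mem_frontier {E : Type*} [NormedAddCommGroup E] [NormedSpace ℝ E]
    {Ω : Set E} (hΩ : IsOpen Ω) (hb : Bornology.IsBounded Ω) {p v : E} (hp : p ∈ Ω)
    (hv : v ≠ 0) : ∃ t : ℝ, p + t • v ∈ frontier Ω := by
  set A : Set ℝ := (fun t : ℝ => p + t • v) ⁻¹' Ω
  have hcont : Continuous fun t : ℝ => p + t • v := by fun_prop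
  have hA : IsOpen A := hΩ.preimage hcont
  have hAbdd : BddAbove A := by
    obtain ⟨R, hR⟩ := hb.subset_closedBall p
    refine ⟨R / ‖v‖, fun t ht => ?_⟩
    have : |t| * ‖v‖ ≤ R := by simpa [norm_smul] using hR ht
    exact (le_abs_self t).trans ((le_div_iff₀ (norm_pos_iff.mpr hv)).mpr this)
  obtain ⟨t, htA, htA'⟩ : ∃ t, t ∈ closure A ∧ t ∉ A := by
    by_contra! h
    exact not_bddAbove_univ (hAbdd.mono (isPreconnected_univ.subset_of_closure_inter_subset hA
      ⟨0, mem_univ _, by simpa [A] using hp⟩ fun t ⟨hc, _⟩ => h t hc))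
  exact ⟨t, hcont.frontier_preimage_subset Ω (hA.frontier_eq ▸ ⟨htA, htA'⟩)⟩

theorem finrank_sub_one_le_dimH_frontier {E : Type*} [NormedAddCommGroup E]
    [InnerProductSpace ℝ E] [FiniteDimensional ℝ E] {Ω : Set E} (hΩ : IsOpen Ω)
    (hne : Ω.Nonempty) (hb : Bornology.IsBounded Ω) :
    ((Module.finrank ℝ E - 1 : ℕ) : ℝ≥0∞) ≤ dimH (frontier Ω) := by
  rcases subsingleton_or_nontrivial E with _ | _
  · simp [Module.finrank_zero_of_subsingleton]
  obtain ⟨v, hv⟩ := exists_ne (0 : E)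
  obtain ⟨p, hp⟩ := hne
  set P := (ℝ ∙ v)ᗮ.orthogonalProjectionOnto
  have hPΩ : P '' Ω ⊆ P '' frontier Ω := by
    rintro _ ⟨q, hq, rfl⟩
    obtain ⟨t, ht⟩ := exists_add_smul_mem_frontier hΩ hb hq hv
    exact ⟨q + t • v, ht, by
      simp [P, Submodule.orthogonalProjectionOnto_orthogonalComplement_singleton_eq_zero]⟩
  have hP : Function.Surjective P := fun w =>
    ⟨w, (ℝ ∙ v)ᗮ.orthogonalProjectionOnto_mem_subspace_eq_self w⟩
  have hnhds : P '' frontier Ω ∈ 𝓝 (P p) :=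
    mem_of_superset ((P.isOpenMap hP).image_mem_nhds (hΩ.mem_nhds hp)) hPΩ
  have hrank : Module.finrank ℝ (ℝ ∙ v)ᗮ = Module.finrank ℝ E - 1 := by
    have := (ℝ ∙ v).finrank_add_finrank_orthogonal
    rw [finrank_span_singleton hv] at this
    omega
  calc ((Module.finrank ℝ E - 1 : ℕ) : ℝ≥0∞) = dimH (P '' frontier Ω) := by
        rw [Real.dimH_of_mem_nhds hnhds, hrank]
    _ ≤ dimH (frontier Ω) := P.lipschitz.dimH_image_le _

section AhlforsRegular

variable {n : ℕ} {d 𝒜 : ℝ} {Γ : Set (Eucl n)}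

theorem hausdorffMeasure_lt_top_of_ahlforsRegularWithin {R : ℝ≥0∞} {r : ℝ}
    (hΓ : IsCompact Γ) (hr : 0 < r) (hrR : ENNReal.ofReal r < R)
    (hAR : AhlforsRegularWithin d 𝒜 Γ R) : μH[d] Γ < ∞ := by
  have := hΓ.measure_lt_top_of_nhdsWithin (μ := sMeasure d Γ) fun x hx =>
    ⟨ball x r, mem_nhdsWithin_of_mem_nhds (ball_mem_nhds x hr),
      (hAR x hx r hr hrR).2.trans_lt ofReal_lt_top⟩
  rwa [sMeasure, Measure.restrict_apply_self] at this

theorem dimH_le_of_ahlforsRegularWithin (hd : 0 ≤ d) (hΓ : IsCompact Γ)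
    (hAR : AhlforsRegularWithin d 𝒜 Γ (ediam Γ)) : dimH Γ ≤ ENNReal.ofReal d := by
  rcases Γ.subsingleton_or_nontrivial with hs | hs
  · simp [dimH_subsingleton hs]
  obtain ⟨r, -, hr, hrR⟩ := ENNReal.lt_iff_exists_real_btwn.mp (ediam_pos_iff.mpr hs)
  have hfin := hausdorffMeasure_lt_top_of_ahlforsRegularWithin hΓ (ofReal_pos.mp hr) hrR hAR
  rw [← Real.coe_toNNReal d hd] at hfin
  exact dimH_le_of_hausdorffMeasure_ne_top hfin.ne

end AhlforsRegular

theorem statement5_general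
    (n : ℕ) (Ω : Set (Eucl n)) (hΩopen : IsOpen Ω) (hΩne : Ω.Nonempty)
    (hΩbdd : Bornology.IsBounded Ω)
    (d : ℝ) (hd0 : 0 < d)
    (𝒜 : ℝ)
    (hAR : AhlforsRegularWithin d 𝒜 (frontier Ω) (EMetric.diam (frontier Ω))) :
    (n : ℝ) - 1 ≤ d := by
  have hΓ : IsCompact (frontier Ω) := isCompact_of_isClosed_isBounded isClosed_frontier
    (hΩbdd.closure.subset frontier_subset_closure)
  have h := (finrank_sub_one_le_dimH_frontier hΩopen hΩne hΩbdd).trans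
    (dimH_le_of_ahlforsRegularWithin hd0.le hΓ hAR)
  rw [finrank_euclideanSpace_fin, ← ENNReal.ofReal_natCast,
    ENNReal.ofReal_le_ofReal_iff hd0.le] at h
  exact (sub_le_iff_le_add.mpr (mod_cast le_tsub_add)).trans h

/-- a nonempty bounded open set in `ℝ^n` has boundary of dimension at least
`n - 1`; i.e., if its boundary is `d`-Ahlfors regular with `0 < d < n`, then `d ≥ n - 1`. -/
theorem statement5
    (n : ℕ) (hn : 2 ≤ n) (Ω : Set (Eucl n)) (hΩopen : IsOpen Ω) (hΩne : Ω.Nonempty)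
    (hΩbdd : Bornology.IsBounded Ω)
    (d : ℝ) (hd0 : 0 < d) (hdn : d < n)
    (𝒜 : ℝ) (h𝒜 : 1 ≤ 𝒜)
    (hAR : AhlforsRegularWithin d 𝒜 (frontier Ω) (EMetric.diam (frontier Ω))) :
    (n : ℝ) - 1 ≤ d :=
  statement5_general n Ω hΩopen hΩne hΩbdd d hd0 𝒜 hAR

end
end
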